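/- Let G = (A, s, T) be a generalised reachability game on a game arena A with start vertex s and singleton targets T = {t_1, ..., t_n}, and set t_0 := s. Define the preorder graph P on vertex set {t_0, t_1, ..., t_n} with an edge t_i → t_j if and only if t_i ∈ Attr({t_j}). Then the maximum cardinality of a set T' ⊆ T such that Eve has a strategy ensuring that every consistent play from s visits every element of T' equals the maximum, over all directed paths C_0 C_1 ... C_r in the condensation of P with t_0 ∈ C_0, of the sum Σ_{j=0}^{r} |T ∩ C_j|. -/

import Mathlib

/-- A game arena: a finite directed graph in which every vertex has at least one
outgoing edge, together with the set of vertices controlled by Eve (the remaining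
vertices are controlled by Adam). -/
structure Arena (V : Type*) [Fintype V] where
  E : V → V → Prop
  VEve : Set V
  succ_nonempty : ∀ v, ∃ w, E v w

variable {V : Type*} [Fintype V]

/-- An infinite play starting from `s`. -/
def IsPlay (A : Arena V) (s : V) (p : ℕ → V) : Prop :=
  p 0 = s ∧ ∀ i, A.E (p i) (p (i + 1))

/-- The play `p` visits the set `S`. -/
def Visits (p : ℕ → V) (S : Set V) : Prop := ∃ i, p i ∈ S

/-- A strategy maps a history (the sequence of previously visited vertices)
together with the current vertex to a next vertex. -/
def Strategy (V : Type*) : Type _ := List V → V → V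

/-- A strategy is valid if it always moves along an edge. -/
def ValidStrategy (A : Arena V) (σ : Strategy V) : Prop :=
  ∀ h v, A.E v (σ h v)

/-- The history `v_0 ... v_{i-1}` of the play `p` before time `i`. -/
def hist (p : ℕ → V) (i : ℕ) : List V := List.ofFn fun j : Fin i => p j

/-- The play `p` is consistent with the Eve-strategy `σ`. -/
def ConsistentEve (A : Arena V) (σ : Strategy V) (p : ℕ → V) : Prop :=
  ∀ i, p i ∈ A.VEve → p (i + 1) = σ (hist p i) (p i)

/-- The play `p` is consistent with the Adam-strategy `σ`. -/
def ConsistentAdam (A : Arena V) (σ : Strategy V) (p : ℕ → V) : Prop :=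
  ∀ i, p i ∉ A.VEve → p (i + 1) = σ (hist p i) (p i)

/-- The `i`-step Eve-attractor of the set `S`. -/
def AttrN (A : Arena V) (S : Set V) : ℕ → Set V
  | 0 => S
  | i + 1 => AttrN A S i ∪ {u | u ∈ A.VEve ∧ ∃ v, A.E u v ∧ v ∈ AttrN A S i}
      ∪ {u | u ∉ A.VEve ∧ ∀ v, A.E u v → v ∈ AttrN A S i}

/-- The Eve-attractor of the set `S`. -/
def Attr (A : Arena V) (S : Set V) : Set V := ⋃ i, AttrN A S i

/-- Eve wins the generalised reachability game with target sets `F i`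
from `s` if she has a strategy such that every consistent play from `s`
visits every target set. -/
def EveWins {ι : Type*} (A : Arena V) (s : V) (F : ι → Set V) : Prop :=
  ∃ σ : Strategy V, ValidStrategy A σ ∧
    ∀ p, IsPlay A s p → ConsistentEve A σ p → ∀ i, Visits p (F i)

/-- A strongly connected component of the directed graph `E`: a maximal
(nonempty) set of vertices each reachable from every other. -/
def IsSCC {W : Type*} (E : W → W → Prop) (C : Set W) : Prop :=
  C.Nonempty ∧ (∀ u ∈ C, ∀ v ∈ C, Relation.ReflTransGen E u v) ∧
    ∀ D : Set W, C ⊆ D → (∀ u ∈ D, ∀ v ∈ D, Relation.ReflTransGen E u v) → D = C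

/-- An edge of the condensation of `E`, between two (distinct) SCCs. -/
def CondEdge {W : Type*} (E : W → W → Prop) (C C' : Set W) : Prop :=
  C ≠ C' ∧ ∃ u ∈ C, ∃ v ∈ C', E u v

/-- The preorder graph on the vertices `t 0 = s, t 1, ..., t n`:
an edge from `u` to `v` iff `u ∈ Attr({v})`. -/
def Pedge (A : Arena V) (s : V) {n : ℕ} (t : Fin n → V) (u v : V) : Prop :=
  (u = s ∨ ∃ i, u = t i) ∧ (v = s ∨ ∃ i, v = t i) ∧ u ∈ Attr A ({v} : Set V)


/-!
Eve can force every play from `s` through all of a set `X` exactly when `s ∈ Attr {x}` for all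
`x ∈ X` and any `x, y ∈ X` satisfy `x ∈ Attr {y}` or `y ∈ Attr {x}`. If `x ∉ Attr {y}` and
`y ∉ Attr {x}`, Adam keeps out of `Attr {y}` until `y` is visited and out of `Attr {x}` afterwards,
so whichever of the two comes first, the other never follows. Conversely, Eve sorts `X` along the
(transitive) relation `x ∈ Attr {y}` and attracts the play to its elements one after the other.

In the preorder graph this relation is reachability. A sorted list of such a set `X` of targets is
a walk from `s`, and its SCCs form a path of the condensation covering `X`; conversely, the SCCs of
a path of the condensation are pairwise disjoint and linearly ordered by reachability, so the
targets on a path from the SCC of `s` form such a set, of size `Σ_j |T ∩ C_j|`.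
-/

section Attractor

variable (A : Arena V) {S T : Set V} {u v w : V}

lemma mem_attrN_succ {i : ℕ} :
    v ∈ AttrN A S (i + 1) ↔ v ∈ AttrN A S i ∨ (v ∈ A.VEve ∧ ∃ w, A.E v w ∧ w ∈ AttrN A S i) ∨
      (v ∉ A.VEve ∧ ∀ w, A.E v w → w ∈ AttrN A S i) := by
  simp only [AttrN, Set.mem_union, Set.mem_ofPred_eq, or_assoc]

lemma attrN_mono (S : Set V) : Monotone (AttrN A S) :=
  monotone_nat_of_le_succ fun _ _ hv => (mem_attrN_succ A).2 (Or.inl hv)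

lemma subset_attr (S : Set V) : S ⊆ Attr A S := fun _ hv => Set.mem_iUnion.2 ⟨0, hv⟩

lemma mem_attr_of_eve (hv : v ∈ A.VEve) (hvw : A.E v w) (hw : w ∈ Attr A S) : v ∈ Attr A S := by
  obtain ⟨i, hi⟩ := Set.mem_iUnion.1 hw
  exact Set.mem_iUnion.2 ⟨i + 1, (mem_attrN_succ A).2 (Or.inr (Or.inl ⟨hv, w, hvw, hi⟩))⟩

lemma mem_attr_of_adam (hv : v ∉ A.VEve) (h : ∀ w, A.E v w → w ∈ Attr A S) : v ∈ Attr A S := by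
  have hlevel : ∀ w, ∃ i, A.E v w → w ∈ AttrN A S i := fun w => by
    by_cases hvw : A.E v w
    · obtain ⟨i, hi⟩ := Set.mem_iUnion.1 (h w hvw)
      exact ⟨i, fun _ => hi⟩
    · exact ⟨0, fun h' => absurd h' hvw⟩
  choose level hlevel using hlevel
  obtain ⟨N, hN⟩ := Finite.exists_le level
  exact Set.mem_iUnion.2 ⟨N + 1, (mem_attrN_succ A).2 (Or.inr (Or.inr
    ⟨hv, fun w hvw => attrN_mono A S (hN w) (hlevel w hvw)⟩))⟩

lemma attr_subset_of_subset_attr (h : T ⊆ Attr A S) : Attr A T ⊆ Attr A S := by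
  intro v hv
  obtain ⟨i, hi⟩ := Set.mem_iUnion.1 hv
  clear hv
  induction i generalizing v with
  | zero => exact h hi
  | succ i ih =>
    rcases (mem_attrN_succ A).1 hi with hi | ⟨hv, w, hvw, hw⟩ | ⟨hv, hall⟩
    · exact ih hi
    · exact mem_attr_of_eve A hv hvw (ih hw)
    · exact mem_attr_of_adam A hv fun w hvw => ih (hall w hvw)

lemma mem_attr_singleton_trans (huv : u ∈ Attr A {v}) (hvw : v ∈ Attr A {w}) :
    u ∈ Attr A {w} :=
  attr_subset_of_subset_attr A (Set.singleton_subset_iff.2 hvw) huv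

end Attractor

section Moves

variable (A : Arena V) {S : Set V} {v w : V}

open Classical in
noncomputable def Arena.succWith (P : V → Prop) (v : V) : V :=
  if h : ∃ w, A.E v w ∧ P w then h.choose else (A.succ_nonempty v).choose

lemma Arena.edge_succWith (P : V → Prop) (v : V) : A.E v (A.succWith P v) := by
  unfold Arena.succWith
  split_ifs with h
  · exact h.choose_spec.1
  · exact (A.succ_nonempty v).choose_spec

lemma Arena.succWith_spec {P : V → Prop} (h : ∃ w, A.E v w ∧ P w) : P (A.succWith P v) := by
  rw [Arena.succWith, dif_pos h]
  exact h.choose_spec.2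

/-- Moving to a level of the attractor that `v` is not in decreases the least level containing the
current vertex, without that level having to be computed. -/
noncomputable def attrMove (S : Set V) (v : V) : V :=
  A.succWith (fun w => ∃ i, w ∈ AttrN A S i ∧ v ∉ AttrN A S i) v

noncomputable def trapMove (S : Set V) (v : V) : V :=
  A.succWith (· ∉ Attr A S) v

lemma exists_attrN_boundary {N : ℕ} (hv : v ∈ AttrN A S N) (hvS : v ∉ S) :
    ∃ m < N, v ∉ AttrN A S m ∧ v ∈ AttrN A S (m + 1) := by
  induction N with
  | zero => exact absurd hv hvS
  | succ N ih =>
    by_cases hvN : v ∈ AttrN A S N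
    · obtain ⟨m, hmN, hm⟩ := ih hvN
      exact ⟨m, by omega, hm⟩
    · exact ⟨N, by omega, hvN, hv⟩

lemma mem_attrN_of_step {N : ℕ} (hv : v ∈ AttrN A S (N + 1)) (hvS : v ∉ S) (hvw : A.E v w)
    (hmove : v ∈ A.VEve → w = attrMove A S v) : w ∈ AttrN A S N := by
  obtain ⟨m, hmN, hvm, hvm'⟩ := exists_attrN_boundary A hv hvS
  rcases (mem_attrN_succ A).1 hvm' with hvm'' | ⟨hve, w', hvw', hw'⟩ | ⟨-, hall⟩
  · exact absurd hvm'' hvm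
  · obtain ⟨i, hwi, hvi⟩ : ∃ i, attrMove A S v ∈ AttrN A S i ∧ v ∉ AttrN A S i :=
      A.succWith_spec (P := fun w => ∃ i, w ∈ AttrN A S i ∧ v ∉ AttrN A S i)
        ⟨w', hvw', m, hw', hvm⟩
    have him : i ≤ m := by
      by_contra! hmi
      exact hvi (attrN_mono A S hmi hvm')
    rw [hmove hve]
    exact attrN_mono A S (by omega) hwi
  · exact attrN_mono A S (by omega) (hall w hvw)

lemma exists_mem_of_attrMove {p : ℕ → V} (hp : ∀ i, A.E (p i) (p (i + 1))) (N : ℕ) {i₀ : ℕ}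
    (h₀ : p i₀ ∈ AttrN A S N)
    (hσ : ∀ i ≥ i₀, (∀ j, i₀ ≤ j → j ≤ i → p j ∉ S) → p i ∈ A.VEve →
      p (i + 1) = attrMove A S (p i)) :
    ∃ i ≥ i₀, p i ∈ S := by
  induction N generalizing i₀ with
  | zero => exact ⟨i₀, le_rfl, h₀⟩
  | succ N ih =>
    by_cases hS : p i₀ ∈ S
    · exact ⟨i₀, le_rfl, hS⟩
    have h₁ : p (i₀ + 1) ∈ AttrN A S N :=
      mem_attrN_of_step A h₀ hS (hp i₀) <| hσ i₀ le_rfl fun j hj hj' => by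
        rwa [le_antisymm hj' hj]
    obtain ⟨i, hi, hiS⟩ := ih h₁ fun i hi hfree => hσ i (by omega) fun j hj hj' => by
      rcases eq_or_lt_of_le hj with rfl | hlt
      · exact hS
      · exact hfree j hlt hj'
    exact ⟨i, by omega, hiS⟩

lemma notMem_attr_of_trapMove {p : ℕ → V} (hp : ∀ i, A.E (p i) (p (i + 1))) {i k : ℕ}
    (hik : i ≤ k) (hi : p i ∉ Attr A S)
    (hτ : ∀ m, i ≤ m → m < k → p m ∉ A.VEve → p (m + 1) = trapMove A S (p m)) :
    p k ∉ Attr A S := by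
  induction k, hik using Nat.le_induction with
  | base => exact hi
  | succ k hik ih =>
    have hk := ih fun m hm hmk => hτ m hm (by omega)
    by_cases hv : p k ∈ A.VEve
    · exact fun h => hk (mem_attr_of_eve A hv (hp k) h)
    · rw [hτ k hik (by omega) hv]
      apply A.succWith_spec (P := (· ∉ Attr A S))
      by_contra! h
      exact hk (mem_attr_of_adam A hv h)

end Moves

section Plays

lemma hist_succ {α : Type*} (p : ℕ → α) (n : ℕ) : hist p (n + 1) = hist p n ++ [p n] := by
  rw [hist, hist, List.ofFn_succ', List.concat_eq_append]
  rfl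

lemma mem_hist {α : Type*} {p : ℕ → α} {n : ℕ} {x : α} : x ∈ hist p n ↔ ∃ j < n, p j = x := by
  simp [hist, List.mem_ofFn, Fin.exists_iff]

open Classical in
noncomputable def outcomeState (A : Arena V) (σ τ : Strategy V) (s : V) : ℕ → List V × V
  | 0 => ([], s)
  | n + 1 =>
    let q := outcomeState A σ τ s n
    (q.1 ++ [q.2], if q.2 ∈ A.VEve then σ q.1 q.2 else τ q.1 q.2)

variable (A : Arena V)

lemma exists_play_consistent {σ τ : Strategy V} (hσ : ValidStrategy A σ)
    (hτ : ValidStrategy A τ) (s : V) :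
    ∃ p, IsPlay A s p ∧ ConsistentEve A σ p ∧ ConsistentAdam A τ p := by
  classical
  set q := outcomeState A σ τ s
  have hq : ∀ n, (q n).1 = hist (fun m => (q m).2) n := by
    intro n
    induction n with
    | zero => rfl
    | succ n ih => rw [hist_succ, ← ih]; rfl
  have hstep : ∀ n, (q (n + 1)).2 = if (q n).2 ∈ A.VEve then σ (q n).1 (q n).2
      else τ (q n).1 (q n).2 := fun n => rfl
  refine ⟨fun n => (q n).2, ⟨rfl, fun i => ?_⟩, fun i hi => ?_, fun i hi => ?_⟩
  · dsimp only
    rw [hstep]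
    split_ifs
    · exact hσ _ _
    · exact hτ _ _
  · dsimp only at hi ⊢
    rw [hstep, if_pos hi, hq]
  · dsimp only at hi ⊢
    rw [hstep, if_neg hi, hq]

def GuaranteesVisit (s : V) (σ : Strategy V) (X : Set V) : Prop :=
  ∀ p, IsPlay A s p → ConsistentEve A σ p → ∀ v ∈ X, ∃ i, p i = v

variable {s x y : V} {σ : Strategy V} {X : Set V}

lemma mem_attr_of_guaranteesVisit (hσ : ValidStrategy A σ) (hwin : GuaranteesVisit A s σ X)
    (hy : y ∈ X) : s ∈ Attr A {y} := by
  by_contra hs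
  obtain ⟨p, hp, hpσ, hpτ⟩ := exists_play_consistent A hσ
    (τ := fun _ v => trapMove A {y} v) (fun _ v => A.edge_succWith _ v) s
  obtain ⟨i, rfl⟩ := hwin p hp hpσ y hy
  exact notMem_attr_of_trapMove A hp.2 (Nat.zero_le i) (by rwa [hp.1])
    (fun m _ _ hm => hpτ m hm) (subset_attr A _ rfl)

lemma mem_attr_or_mem_attr_of_guaranteesVisit (hσ : ValidStrategy A σ)
    (hwin : GuaranteesVisit A s σ X) (hx : x ∈ X) (hy : y ∈ X) :
    x ∈ Attr A {y} ∨ y ∈ Attr A {x} := by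
  classical
  refine or_iff_not_imp_left.2 fun hxy => ?_
  by_contra hyx
  -- Adam keeps out of `Attr A {y}` until `y` has been visited, and out of `Attr A {x}` afterwards.
  let τ : Strategy V := fun h v => if y ∈ h ++ [v] then trapMove A {x} v else trapMove A {y} v
  have hτ : ValidStrategy A τ := fun h v => by
    dsimp only [τ]
    split_ifs <;> exact A.edge_succWith _ v
  obtain ⟨p, hp, hpσ, hpτ⟩ := exists_play_consistent A hσ hτ s
  have hvisit : ∃ i, p i = y := hwin p hp hpσ y hy
  obtain ⟨ix, hix⟩ := hwin p hp hpσ x hx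
  have hadam : ∀ m, p m ∉ A.VEve →
      p (m + 1) = if Nat.find hvisit ≤ m then trapMove A {x} (p m) else trapMove A {y} (p m) := by
    intro m hm
    rw [hpτ m hm]
    simp only [τ, ← hist_succ, mem_hist, Nat.lt_succ_iff, Nat.find_le_iff]
  have hy_attr : p (Nat.find hvisit) ∈ Attr A {y} := by
    rw [Nat.find_spec hvisit]
    exact subset_attr A _ rfl
  rcases lt_or_ge ix (Nat.find hvisit) with hlt | hle
  · refine notMem_attr_of_trapMove A hp.2 hlt.le (by rwa [hix]) (fun m _ hm hv => ?_) hy_attr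
    rw [hadam m hv, if_neg (by omega)]
  · refine notMem_attr_of_trapMove A hp.2 hle (by rwa [Nat.find_spec hvisit])
      (fun m hm _ hv => ?_) (by rw [hix]; exact subset_attr A _ rfl)
    rw [hadam m hv, if_pos hm]

end Plays

theorem exists_nodup_pairwise_of_total {α : Type*} {R : α → α → Prop} {X : Set α}
    (hX : X.Finite) (htrans : ∀ a b c, R a b → R b c → R a c)
    (htotal : ∀ a ∈ X, ∀ b ∈ X, R a b ∨ R b a) :
    ∃ l : List α, l.Nodup ∧ (∀ x, x ∈ l ↔ x ∈ X) ∧ l.Pairwise R := by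
  classical
  have := hX.fintype
  let le : X → X → Bool := fun a b => decide (R a b)
  let l := (Finset.univ : Finset X).toList.mergeSort le
  refine ⟨l.map Subtype.val, ?_, fun x => ?_, ?_⟩
  · exact ((List.mergeSort_perm _ _).nodup_iff.2 (Finset.nodup_toList _)).map
      Subtype.val_injective
  · simp [l, List.mem_mergeSort]
  · rw [List.pairwise_map]
    refine (List.pairwise_mergeSort (fun a b c hab hbc => ?_) (fun a b => ?_) _).imp
      (by simp [le])
    · simp only [le, decide_eq_true_eq] at hab hbc ⊢
      exact htrans _ _ _ hab hbc
    · simpa [le] using htotal a a.2 b b.2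

section ChainStrategy

open Classical in
/-- The number of the targets `L[1], L[2], …` that the history `h` has visited, in this order. -/
noncomputable def stage {α : Type*} (L h : List α) : ℕ :=
  h.foldl (fun j v => if L[j + 1]? = some v then j + 1 else j) 0

open Classical in
lemma stage_append {α : Type*} (L h : List α) (v : α) :
    stage L (h ++ [v]) = if L[stage L h + 1]? = some v then stage L h + 1 else stage L h := by
  rw [stage, stage, List.foldl_append]
  rfl

lemma stage_hist_of_forall_ne {α : Type*} {L : List α} {p : ℕ → α} {i j k : ℕ}
    (hj : j + 1 < L.length) (hi : stage L (hist p (i + 1)) = j) (hik : i ≤ k)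
    (hfree : ∀ m, i ≤ m → m ≤ k → p m ≠ L[j + 1]) : stage L (hist p (k + 1)) = j := by
  induction k, hik using Nat.le_induction with
  | base => exact hi
  | succ k hik ih =>
    rw [hist_succ, stage_append, ih fun m hm hmk => hfree m hm (by omega),
      List.getElem?_eq_getElem hj, if_neg]
    exact fun h => hfree (k + 1) (by omega) le_rfl (Option.some_inj.1 h).symm

variable (A : Arena V)

noncomputable def chainStrategy (L : List V) : Strategy V :=
  fun h v => attrMove A {L.getD (stage L (h ++ [v]) + 1) v} v

lemma validStrategy_chainStrategy (L : List V) : ValidStrategy A (chainStrategy A L) :=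
  fun _ v => A.edge_succWith _ v

lemma exists_visit_next_of_chainStrategy {L : List V} (hchain : L.IsChain fun a b => a ∈ Attr A {b})
    (hnodup : L.Nodup) {p : ℕ → V} (hp : ∀ i, A.E (p i) (p (i + 1)))
    (hσ : ConsistentEve A (chainStrategy A L) p) {i j : ℕ} (hj : j + 1 < L.length)
    (hpi : p i = L[j]) (hi : stage L (hist p (i + 1)) = j) :
    ∃ k, p k = L[j + 1] ∧ stage L (hist p (k + 1)) = j + 1 := by
  classical
  have hne : p i ≠ L[j + 1] := by
    rw [hpi, Ne, hnodup.getElem_inj_iff]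
    omega
  obtain ⟨N, hN⟩ := Set.mem_iUnion.1 (hchain.getElem j hj)
  have hreach : ∃ k ≥ i, p k ∈ ({L[j + 1]} : Set V) := by
    refine exists_mem_of_attrMove A hp N (hpi ▸ hN) fun k hik hfree hv => ?_
    rw [hσ k hv, chainStrategy, ← hist_succ, stage_hist_of_forall_ne hj hi hik hfree,
      List.getD_eq_getElem?_getD, List.getElem?_eq_getElem hj, Option.getD_some]
  obtain ⟨hik, hk⟩ := Nat.find_spec hreach
  have hik' : Nat.find hreach ≠ i := fun h => hne (h ▸ hk)
  obtain ⟨k, hk'⟩ : ∃ k, Nat.find hreach = k + 1 := ⟨Nat.find hreach - 1, by omega⟩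
  have hfree : ∀ m, i ≤ m → m ≤ k → p m ≠ L[j + 1] := fun m him hmk hm =>
    Nat.find_min hreach (by omega) ⟨him, hm⟩
  refine ⟨Nat.find hreach, hk, ?_⟩
  rw [hist_succ, stage_append, hk', stage_hist_of_forall_ne hj hi (by omega) hfree, ← hk',
    List.getElem?_eq_getElem hj, if_pos (congrArg some hk.symm)]

theorem guaranteesVisit_chainStrategy {s : V} {l : List V}
    (hchain : (s :: l).IsChain fun a b => a ∈ Attr A {b}) (hnodup : (s :: l).Nodup) :
    GuaranteesVisit A s (chainStrategy A (s :: l)) {v | v ∈ s :: l} := by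
  intro p hp hσ v hv
  suffices h : ∀ j (hj : j < (s :: l).length),
      ∃ i, p i = (s :: l)[j] ∧ stage (s :: l) (hist p (i + 1)) = j by
    obtain ⟨j, hj, rfl⟩ := List.getElem_of_mem hv
    obtain ⟨i, hi, -⟩ := h j hj
    exact ⟨i, hi⟩
  intro j hj
  induction j with
  | zero =>
    refine ⟨0, hp.1, ?_⟩
    rw [hist_succ, stage_append, if_neg]
    · rfl
    · intro h
      have := (List.getElem?_inj (i := 0) (j := 1) (by simp) hnodup).1 (hp.1 ▸ h.symm)
      omega
  | succ j ih =>
    obtain ⟨i, hpi, hi⟩ := ih (by omega)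
    exact exists_visit_next_of_chainStrategy A hchain hnodup hp.2 hσ hj hpi hi

end ChainStrategy

def IsAttrChainFrom (A : Arena V) (s : V) (X : Set V) : Prop :=
  (∀ x ∈ X, s ∈ Attr A {x}) ∧ ∀ x ∈ X, ∀ y ∈ X, x ∈ Attr A {y} ∨ y ∈ Attr A {x}

theorem exists_guaranteesVisit_iff (A : Arena V) (s : V) (X : Set V) :
    (∃ σ, ValidStrategy A σ ∧ GuaranteesVisit A s σ X) ↔ IsAttrChainFrom A s X := by
  constructor
  · rintro ⟨σ, hσ, hwin⟩
    exact ⟨fun x hx => mem_attr_of_guaranteesVisit A hσ hwin hx,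
      fun x hx y hy => mem_attr_or_mem_attr_of_guaranteesVisit A hσ hwin hx hy⟩
  · rintro ⟨hs, htotal⟩
    obtain ⟨l, hnodup, hl, hsorted⟩ := exists_nodup_pairwise_of_total (X := X \ {s})
      (R := fun a b => a ∈ Attr A {b}) (Set.toFinite _)
      (fun _ _ _ => mem_attr_singleton_trans A)
      (fun x hx y hy => htotal x hx.1 y hy.1)
    have hpairwise : (s :: l).Pairwise fun a b => a ∈ Attr A {b} :=
      List.pairwise_cons.2 ⟨fun x hx => hs x ((hl x).1 hx).1, hsorted⟩
    have hnodup' : (s :: l).Nodup := List.nodup_cons.2 ⟨fun h => ((hl s).1 h).2 rfl, hnodup⟩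
    refine ⟨chainStrategy A (s :: l), validStrategy_chainStrategy A _, fun p hp hσ x hx => ?_⟩
    refine guaranteesVisit_chainStrategy A hpairwise.isChain hnodup' p hp hσ x ?_
    by_cases hxs : x = s
    · exact hxs ▸ List.mem_cons_self
    · exact List.mem_cons_of_mem s ((hl x).2 ⟨hx, hxs⟩)

section Condensation

open Relation

variable {W : Type*} {P : W → W → Prop} {C : ℕ → Set W} {r : ℕ}

def sccOf (P : W → W → Prop) (u : W) : Set W := {v | ReflTransGen P u v ∧ ReflTransGen P v u}

lemma mem_sccOf_self (u : W) : u ∈ sccOf P u := ⟨.refl, .refl⟩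

lemma isSCC_sccOf (P : W → W → Prop) (u : W) : IsSCC P (sccOf P u) :=
  ⟨⟨u, mem_sccOf_self u⟩, fun _ hx _ hy => hx.2.trans hy.1, fun _ hD hmut =>
    (hD.antisymm fun v hv => ⟨hmut u (hD (mem_sccOf_self u)) v hv,
      hmut v hv u (hD (mem_sccOf_self u))⟩).symm⟩

lemma IsSCC.eq_sccOf {D : Set W} (hD : IsSCC P D) {u : W} (hu : u ∈ D) : D = sccOf P u :=
  (hD.2.2 (sccOf P u) (fun v hv => ⟨hD.2.1 u hu v hv, hD.2.1 v hv u hu⟩) (isSCC_sccOf P u).2.1).symm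

lemma IsSCC.disjoint {D D' : Set W} (hD : IsSCC P D) (hD' : IsSCC P D') (hne : D ≠ D') :
    Disjoint D D' :=
  Set.disjoint_left.2 fun _ hx hx' => hne ((hD.eq_sccOf hx).trans (hD'.eq_sccOf hx').symm)

def IsCondensationPath (P : W → W → Prop) (r : ℕ) (C : ℕ → Set W) : Prop :=
  (∀ j ≤ r, IsSCC P (C j)) ∧ ∀ j < r, CondEdge P (C j) (C (j + 1))

lemma IsCondensationPath.reflTransGen (hC : IsCondensationPath P r C) {i j : ℕ} (hij : i ≤ j)
    (hj : j ≤ r) {x y : W} (hx : x ∈ C i) (hy : y ∈ C j) : ReflTransGen P x y := by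
  induction j, hij using Nat.le_induction generalizing y with
  | base => exact (hC.1 i hj).2.1 x hx y hy
  | succ j _ ih =>
    obtain ⟨-, a, ha, b, hb, hab⟩ := hC.2 j hj
    exact ((ih (by omega) ha).tail hab).trans ((hC.1 (j + 1) hj).2.1 b hb y hy)

lemma IsCondensationPath.ne (hC : IsCondensationPath P r C) {i j : ℕ} (hij : i < j) (hj : j ≤ r) :
    C i ≠ C j := by
  intro heq
  obtain ⟨hne, a, ha, b, hb, hab⟩ := hC.2 i (by omega)
  have hba : ReflTransGen P b a := hC.reflTransGen hij hj hb (heq ▸ ha)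
  have hbC : b ∈ C i := (hC.1 i (by omega)).eq_sccOf ha ▸ ⟨.single hab, hba⟩
  exact hne (((hC.1 i (by omega)).eq_sccOf hbC).trans ((hC.1 (i + 1) (by omega)).eq_sccOf hb).symm)

lemma IsCondensationPath.pairwiseDisjoint (hC : IsCondensationPath P r C) :
    (Finset.range (r + 1) : Set ℕ).PairwiseDisjoint C := by
  intro i hi j hj hij
  simp only [Finset.coe_range, Set.mem_Iio] at hi hj
  rcases lt_or_gt_of_ne hij with h | h
  · exact (hC.1 i (by omega)).disjoint (hC.1 j (by omega)) (hC.ne h (by omega))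
  · exact ((hC.1 j (by omega)).disjoint (hC.1 i (by omega)) (hC.ne h (by omega))).symm

lemma IsCondensationPath.ncard_biUnion_inter [Finite W] (hC : IsCondensationPath P r C)
    (X : Set W) :
    (⋃ j ∈ Finset.range (r + 1), X ∩ C j).ncard = ∑ j ∈ Finset.range (r + 1), (X ∩ C j).ncard := by
  have := (Finset.range (r + 1)).finite_toSet.ncard_biUnion (s := fun j => X ∩ C j)
    (fun _ _ => Set.toFinite _)
    (hC.pairwiseDisjoint.mono fun _ => Set.inter_subset_right)
  rwa [finsum_mem_coe_finset, Finset.set_biUnion_coe] at this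

theorem exists_isCondensationPath_of_isChain {a : W} {l : List W} (hchain : (a :: l).IsChain P) :
    ∃ r C, IsCondensationPath P r C ∧ a ∈ C 0 ∧ ∀ x ∈ l, ∃ j ≤ r, x ∈ C j := by
  induction l generalizing a with
  | nil =>
    exact ⟨0, fun _ => sccOf P a, ⟨fun _ _ => isSCC_sccOf P a, fun _ h => absurd h (by omega)⟩,
      mem_sccOf_self a, by simp⟩
  | cons b l ih =>
    obtain ⟨hab, hchain⟩ := List.isChain_cons_cons.1 hchain
    obtain ⟨r, C, hC, hb, hcov⟩ := ih hchain
    by_cases ha : a ∈ C 0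
    · exact ⟨r, C, hC, ha, List.forall_mem_cons.2 ⟨⟨0, by omega, hb⟩, hcov⟩⟩
    let C' : ℕ → Set W := fun
      | 0 => sccOf P a
      | j + 1 => C j
    refine ⟨r + 1, C', ⟨fun j hj => ?_, fun j hj => ?_⟩, mem_sccOf_self a,
      List.forall_mem_cons.2 ⟨⟨1, by omega, hb⟩, fun x hx => ?_⟩⟩
    · cases j with
      | zero => exact isSCC_sccOf P a
      | succ j => exact hC.1 j (by omega)
    · cases j with
      | zero =>
        exact ⟨fun h => ha ((show sccOf P a = C 0 from h) ▸ mem_sccOf_self a),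
          a, mem_sccOf_self a, b, hb, hab⟩
      | succ j => exact hC.2 j (by omega)
    · obtain ⟨j, hj, hx⟩ := hcov x hx
      exact ⟨j + 1, by omega, hx⟩

end Condensation

section PreorderGraph

open Relation

variable (A : Arena V) {s : V} {n : ℕ} {t : Fin n → V}

lemma mem_attr_of_reflTransGen_pedge {u v : V} (h : ReflTransGen (Pedge A s t) u v) :
    u ∈ Attr A {v} := by
  induction h with
  | refl => exact subset_attr A _ rfl
  | tail _ huv ih => exact mem_attr_singleton_trans A ih huv.2.2

theorem exists_isCondensationPath_ncard_le {T' : Set V} (hT' : T' ⊆ {v | ∃ i, v = t i})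
    (hT'chain : IsAttrChainFrom A s T') :
    ∃ r C, IsCondensationPath (Pedge A s t) r C ∧ s ∈ C 0 ∧
      T'.ncard ≤ ∑ j ∈ Finset.range (r + 1), ({v | ∃ i, v = t i} ∩ C j).ncard := by
  obtain ⟨l, -, hl, hsorted⟩ := exists_nodup_pairwise_of_total
    (R := fun a b => a ∈ Attr A {b}) T'.toFinite (fun _ _ _ => mem_attr_singleton_trans A)
    hT'chain.2
  have hvertex : ∀ x ∈ s :: l, x = s ∨ ∃ i, x = t i := by
    intro x hx
    rcases List.mem_cons.1 hx with rfl | hx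
    · exact Or.inl rfl
    · exact Or.inr (hT' ((hl x).1 hx))
  have hchain : (s :: l).IsChain (Pedge A s t) :=
    (List.Pairwise.imp_of_mem (fun ha hb hab => ⟨hvertex _ ha, hvertex _ hb, hab⟩)
      (List.pairwise_cons.2 ⟨fun x hx => hT'chain.1 x ((hl x).1 hx), hsorted⟩)).isChain
  obtain ⟨r, C, hC, hsC, hcov⟩ := exists_isCondensationPath_of_isChain hchain
  refine ⟨r, C, hC, hsC, (Set.ncard_le_ncard fun x hx => ?_).trans
    (Finset.set_ncard_biUnion_le _ _)⟩
  obtain ⟨j, hj, hxj⟩ := hcov x ((hl x).2 hx)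
  exact Set.mem_biUnion (Finset.mem_range.2 (by omega)) ⟨hT' hx, hxj⟩

lemma IsCondensationPath.isAttrChainFrom {r : ℕ} {C : ℕ → Set V}
    (hC : IsCondensationPath (Pedge A s t) r C) (hs : s ∈ C 0) :
    IsAttrChainFrom A s (⋃ j ∈ Finset.range (r + 1), C j) := by
  simp only [IsAttrChainFrom, Set.mem_iUnion, Finset.mem_range, exists_prop]
  refine ⟨fun x ⟨j, hj, hx⟩ => ?_, fun x ⟨i, hi, hx⟩ y ⟨j, hj, hy⟩ => ?_⟩
  · exact mem_attr_of_reflTransGen_pedge A (hC.reflTransGen (Nat.zero_le j) (by omega) hs hx)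
  · rcases le_total i j with hij | hji
    · exact Or.inl (mem_attr_of_reflTransGen_pedge A (hC.reflTransGen hij (by omega) hx hy))
    · exact Or.inr (mem_attr_of_reflTransGen_pedge A (hC.reflTransGen hji (by omega) hy hx))

end PreorderGraph

/-- with singleton targets `T = {t 1, ..., t n}` and `t 0 = s`,
the maximum size of a subset `T' ⊆ T` all of whose elements Eve can guarantee
to visit equals the maximum, over paths `C 0, ..., C r` in the condensation of
the preorder graph with `s ∈ C 0`, of `Σ_j |T ∩ C j|`. -/
theorem max_promise_eq_condensation (A : Arena V) (s : V) (n : ℕ)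
    (t : Fin n → V) :
    sSup {c : ℕ | ∃ T' : Set V, T' ⊆ {v | ∃ i, v = t i} ∧
        (∃ σ : Strategy V, ValidStrategy A σ ∧
          ∀ p, IsPlay A s p → ConsistentEve A σ p → ∀ v ∈ T', ∃ i, p i = v) ∧
        c = T'.ncard} =
    sSup {c : ℕ | ∃ (r : ℕ) (C : ℕ → Set V),
        (∀ j ≤ r, IsSCC (Pedge A s t) (C j)) ∧ s ∈ C 0 ∧
        (∀ j < r, CondEdge (Pedge A s t) (C j) (C (j + 1))) ∧
        c = ∑ j ∈ Finset.range (r + 1), ({v | ∃ i, v = t i} ∩ C j).ncard} := by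
  apply csSup_eq_csSup_of_forall_exists_le
  · rintro _ ⟨T', hT', hwin, rfl⟩
    obtain ⟨r, C, hC, hsC, hle⟩ :=
      exists_isCondensationPath_ncard_le A hT' ((exists_guaranteesVisit_iff A s T').1 hwin)
    exact ⟨_, ⟨r, C, hC.1, hsC, hC.2, rfl⟩, hle⟩
  · rintro _ ⟨r, C, hSCC, hsC, hE, rfl⟩
    have hC : IsCondensationPath (Pedge A s t) r C := ⟨hSCC, hE⟩
    obtain ⟨σ, hσ, hwin⟩ := (exists_guaranteesVisit_iff A s _).2 (hC.isAttrChainFrom A hsC)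
    refine ⟨_, ⟨_, Set.iUnion₂_subset fun _ _ => Set.inter_subset_left, ⟨σ, hσ, ?_⟩, rfl⟩,
      (hC.ncard_biUnion_inter _).ge⟩
    exact fun p hp hpσ v hv => hwin p hp hpσ v (Set.biUnion_mono subset_rfl
      (fun _ _ => Set.inter_subset_right) hv)
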